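/- Suppose ε < 0.11, |ψ⁰⟩_{RMM'} ∈ S₀^ε and |ψ¹⟩_{RMM'} ∈ S₁^ε (as in the f-BB84 analysis). Let Δ be the trace distance between the states obtained from ψ⁰ and ψ¹ by measuring R in the Hadamard basis. Then 1 - 2h(ε) ≤ 4Δ + (1+Δ)·h(Δ/(1+Δ)); in particular Δ > 0 and hence ψ⁰ ≠ ψ¹. -/

import Mathlib

open scoped Classical ComplexOrder

noncomputable def binEnt (x : ℝ) : ℝ := -x * Real.logb 2 x - (1 - x) * Real.logb 2 (1 - x)

/-- von Neumann entropy (base 2) of a matrix, via eigenvalues (0 if not Hermitian). -/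
noncomputable def vnEnt {d : Type*} [Fintype d] [DecidableEq d] (ρ : Matrix d d ℂ) : ℝ :=
  if h : ρ.IsHermitian then ∑ i, -(h.eigenvalues i) * Real.logb 2 (h.eigenvalues i) else 0

/-- Trace norm of a Hermitian matrix (0 if not Hermitian). -/
noncomputable def traceNorm {d : Type*} [Fintype d] [DecidableEq d] (A : Matrix d d ℂ) : ℝ :=
  if h : A.IsHermitian then ∑ i, |h.eigenvalues i| else 0

noncomputable def fidelity {d : Type*} [Fintype d] [DecidableEq d] (ρ σ : Matrix d d ℂ) : ℝ :=
  if hσ : σ.PosSemidef then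
    if h : ((hσ.1.eigenvectorUnitary.1 * Matrix.diagonal (((↑) : ℝ → ℂ) ∘ (√·) ∘ hσ.1.eigenvalues) *
        (star hσ.1.eigenvectorUnitary : Matrix d d ℂ)) * ρ *
        (hσ.1.eigenvectorUnitary.1 * Matrix.diagonal (((↑) : ℝ → ℂ) ∘ (√·) ∘ hσ.1.eigenvalues) *
        (star hσ.1.eigenvectorUnitary : Matrix d d ℂ))).IsHermitian then ∑ i, Real.sqrt (h.eigenvalues i) else 0
  else 0

noncomputable def pdist {d : Type*} [Fintype d] [DecidableEq d] (ρ σ : Matrix d d ℂ) : ℝ :=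
  Real.sqrt (1 - (fidelity ρ σ) ^ 2)

def IsState {d : Type*} [Fintype d] [DecidableEq d] (ρ : Matrix d d ℂ) : Prop :=
  ρ.PosSemidef ∧ ρ.trace = 1

/-- partial trace over the second tensor factor -/
noncomputable def ptraceR {a b : Type*} [Fintype b] (ρ : Matrix (a × b) (a × b) ℂ) : Matrix a a ℂ :=
  fun i j => ∑ k, ρ (i, k) (j, k)

/-- partial trace over the first tensor factor -/
noncomputable def ptraceL {a b : Type*} [Fintype a] (ρ : Matrix (a × b) (a × b) ℂ) : Matrix b b ℂ :=
  fun i j => ∑ k, ρ (k, i) (k, j)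

/-- conditional von Neumann entropy H(A|B) of a state on A × B -/
noncomputable def condEnt {a b : Type*} [Fintype a] [Fintype b] [DecidableEq a] [DecidableEq b]
    (ρ : Matrix (a × b) (a × b) ℂ) : ℝ := vnEnt ρ - vnEnt (ptraceL ρ)

/-- computational-basis projector on a qubit -/
noncomputable def Pc (b : Fin 2) : Matrix (Fin 2) (Fin 2) ℂ := fun i j => if i = b ∧ j = b then 1 else 0

/-- Hadamard-basis projector on a qubit -/
noncomputable def Ph (b : Fin 2) : Matrix (Fin 2) (Fin 2) ℂ :=
  fun i j => (1 / 2 : ℂ) * (-1) ^ ((i : ℕ) * (b : ℕ)) * (-1) ^ ((b : ℕ) * (j : ℕ))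

/-- measure the first (qubit) factor with rank-one projectors `P`, storing the outcome
classically in its place -/
noncomputable def cqMeasure {m : Type*} [Fintype m] (P : Fin 2 → Matrix (Fin 2) (Fin 2) ℂ)
    (ρ : Matrix (Fin 2 × m) (Fin 2 × m) ℂ) : Matrix (Fin 2 × m) (Fin 2 × m) ℂ :=
  fun zi z'j => if zi.1 = z'j.1 then ∑ r, ∑ t, (P zi.1) r t * ρ (t, zi.2) (r, z'j.2) else 0

/-- outer product |ψ⟩⟨ψ| of a vector -/
noncomputable def outer {d : Type*} (ψ : d → ℂ) : Matrix d d ℂ := fun i j => ψ i * (starRingEnd ℂ) (ψ j)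

/-- trace out the third subsystem -/
noncomputable def trThird {dE dF : ℕ} (ρ : Matrix (Fin 2 × Fin dE × Fin dF) (Fin 2 × Fin dE × Fin dF) ℂ) :
    Matrix (Fin 2 × Fin dE) (Fin 2 × Fin dE) ℂ :=
  fun p q => ∑ f, ρ (p.1, p.2, f) (q.1, q.2, f)

/-- trace out the second subsystem -/
noncomputable def trSecond {dE dF : ℕ} (ρ : Matrix (Fin 2 × Fin dE × Fin dF) (Fin 2 × Fin dE × Fin dF) ℂ) :
    Matrix (Fin 2 × Fin dF) (Fin 2 × Fin dF) ℂ :=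
  fun p q => ∑ e, ρ (p.1, e, p.2) (q.1, e, q.2)

open Kronecker in
/-- probability that local measurements `{O b}` (acting on `M ⊗ M'`) reproduce the outcome of
the rank-one measurement `{R b}` on the qubit `R` of the pure state `ψ` on `R ⊗ M ⊗ M'`. -/
noncomputable def guessProb {dM dM' : ℕ} (R : Fin 2 → Matrix (Fin 2) (Fin 2) ℂ)
    (O : Fin 2 → Matrix (Fin dM × Fin dM') (Fin dM × Fin dM') ℂ)
    (ψ : Fin 2 × Fin dM × Fin dM' → ℂ) : ℝ :=
  (∑ b, ((R b ⊗ₖ O b) * outer ψ).trace).re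

open Kronecker in
/-- the set of normalized pure states on `R ⊗ M ⊗ M'` for which a measurement on `M` and a
measurement on `M'` each predict, with probability at least `1 - ε`, the outcome of measuring
the qubit `R` with the rank-one basis measurement `{R b}`. -/
def predSet {dM dM' : ℕ} (R : Fin 2 → Matrix (Fin 2) (Fin 2) ℂ) (ε : ℝ) :
    Set (Fin 2 × Fin dM × Fin dM' → ℂ) :=
  {ψ | (∑ p, ‖ψ p‖ ^ 2 = 1) ∧
    (∃ Λ : Fin 2 → Matrix (Fin dM) (Fin dM) ℂ, (∀ b, (Λ b).PosSemidef) ∧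
      Λ 0 + Λ 1 = 1 ∧ 1 - ε ≤ guessProb R (fun b => Λ b ⊗ₖ (1 : Matrix (Fin dM') (Fin dM') ℂ)) ψ) ∧
    (∃ Λ' : Fin 2 → Matrix (Fin dM') (Fin dM') ℂ, (∀ b, (Λ' b).PosSemidef) ∧
      Λ' 0 + Λ' 1 = 1 ∧ 1 - ε ≤ guessProb R (fun b => (1 : Matrix (Fin dM) (Fin dM) ℂ) ⊗ₖ Λ' b) ψ)}

/-!
Let `Λ` on `M` guess the computational outcome for `ψ⁰` and `Λ'` on `M'` the Hadamard outcome
for `ψ¹`. As they act on different systems, `Λ_b ⊗ Λ'_z` is a joint measurement, and a weighted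
Cauchy–Schwarz inequality on each of its pieces gives, for every state, the uncertainty relation
`4 p_H + 3 p_C ≤ 6` between the two guessing probabilities. So `Λ'` guesses the Hadamard outcome
of `ψ⁰` with probability at most `3/4 (1 + ε)`, but that of `ψ¹` with probability at least
`1 - ε`. This gap is the bias of a two-outcome test on the measured states, hence at most `Δ`,
so `Δ ≥ (1 - 7ε)/4 > 0`. Finally `h` is concave with `h(1/8) ≥ 1/2`, so `h(ε) ≥ 4ε` and
`1 - 2h(ε) ≤ 1 - 8ε ≤ 4Δ`.
-/

open Matrix
open scoped Kronecker

section ExpVal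

variable {m : Type*} [Fintype m]

noncomputable def expVal (K : Matrix m m ℂ) (x : m → ℂ) : ℝ := (star x ⬝ᵥ (K *ᵥ x)).re

lemma re_trace_mul_outer (K : Matrix m m ℂ) (x : m → ℂ) : (K * outer x).trace.re = expVal K x := by
  simp only [expVal, Matrix.trace, Matrix.diag, Matrix.mul_apply, outer, dotProduct,
    Matrix.mulVec, Pi.star_apply, Finset.mul_sum, RCLike.star_def]
  congr 1
  refine Finset.sum_congr rfl fun i _ => Finset.sum_congr rfl fun j _ => ?_
  ring

lemma expVal_sum {ι : Type*} (s : Finset ι) (K : ι → Matrix m m ℂ) (x : m → ℂ) :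
    expVal (∑ i ∈ s, K i) x = ∑ i ∈ s, expVal (K i) x := by
  simp only [expVal, Matrix.sum_mulVec, dotProduct_sum, Complex.re_sum]

lemma expVal_smul (K : Matrix m m ℂ) (c : ℂ) (x : m → ℂ) :
    expVal K (c • x) = ‖c‖ ^ 2 * expVal K x := by
  simp only [expVal, star_smul, Matrix.mulVec_smul, dotProduct_smul, smul_dotProduct, smul_eq_mul,
    ← mul_assoc, RCLike.star_def, Complex.mul_conj', ← Complex.ofReal_pow, Complex.re_ofReal_mul]

lemma expVal_one [DecidableEq m] (x : m → ℂ) : expVal 1 x = ∑ i, ‖x i‖ ^ 2 := by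
  simp only [expVal, Matrix.one_mulVec, dotProduct, Pi.star_apply, RCLike.star_def,
    Complex.conj_mul', Complex.re_sum, ← Complex.ofReal_pow, Complex.ofReal_re]

lemma Matrix.PosSemidef.expVal_nonneg {K : Matrix m m ℂ} (hK : K.PosSemidef) (x : m → ℂ) :
    0 ≤ expVal K x :=
  hK.re_dotProduct_nonneg x

lemma Matrix.IsHermitian.re_dotProduct_mulVec_comm {K : Matrix m m ℂ} (hK : K.IsHermitian)
    (x y : m → ℂ) : (star y ⬝ᵥ (K *ᵥ x)).re = (star x ⬝ᵥ (K *ᵥ y)).re := by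
  rw [star_dotProduct, star_mulVec, ← dotProduct_mulVec, hK.eq, Complex.star_def,
    Complex.conj_re]

lemma Matrix.PosSemidef.expVal_add_le {K : Matrix m m ℂ} (hK : K.PosSemidef) (x y : m → ℂ)
    {c : ℝ} (hc : 0 < c) :
    expVal K (x + y) ≤ (1 + c⁻¹) * expVal K x + (1 + c) * expVal K y := by
  have key := hK.expVal_nonneg (x - (c : ℂ) • y)
  simp only [expVal, Matrix.mulVec_add, Matrix.mulVec_sub, Matrix.mulVec_smul, star_add,
    star_sub, star_smul, dotProduct_add, dotProduct_sub, add_dotProduct, sub_dotProduct,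
    dotProduct_smul, smul_dotProduct, smul_eq_mul, Complex.add_re, Complex.sub_re,
    RCLike.star_def, Complex.conj_ofReal, Complex.re_ofReal_mul,
    hK.isHermitian.re_dotProduct_mulVec_comm y x] at key ⊢
  field_simp at key ⊢
  nlinarith

lemma expVal_sub (K K' : Matrix m m ℂ) (x : m → ℂ) :
    expVal (K - K') x = expVal K x - expVal K' x := by
  simp only [expVal, Matrix.sub_mulVec, dotProduct_sub, Complex.sub_re]

end ExpVal

section Helstrom

variable {m : Type*} [DecidableEq m]

lemma Matrix.PosSemidef.re_diag_mem_Icc {E : Matrix m m ℂ} (hE : E.PosSemidef)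
    (hE' : (1 - E).PosSemidef) (i : m) : (E i i).re ∈ Set.Icc 0 1 := by
  have h0 := Complex.nonneg_iff.1 (hE.diag_nonneg (i := i))
  have h1 := Complex.nonneg_iff.1 (hE'.diag_nonneg (i := i))
  simp only [Matrix.sub_apply, Matrix.one_apply_eq, Complex.sub_re, Complex.one_re] at h1
  exact ⟨h0.1, by linarith [h1.1]⟩

lemma re_trace_mul_le_half_traceNorm [Fintype m] {D A : Matrix m m ℂ} (hD : D.PosSemidef)
    (hD' : (1 - D).PosSemidef) (hA : A.IsHermitian) (hA0 : A.trace = 0) :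
    (D * A).trace.re ≤ traceNorm A / 2 := by
  set U : Matrix m m ℂ := (hA.eigenvectorUnitary : Matrix m m ℂ)
  set μ := hA.eigenvalues
  have hUU : Uᴴ * U = 1 := Unitary.coe_star_mul_self hA.eigenvectorUnitary
  have hE : (Uᴴ * D * U).PosSemidef := hD.conjTranspose_mul_mul_same U
  have hE' : (1 - Uᴴ * D * U).PosSemidef := by
    simpa [Matrix.mul_sub, Matrix.sub_mul, hUU] using hD'.conjTranspose_mul_mul_same U
  have htrace : (D * A).trace = ∑ i, (Uᴴ * D * U) i i * μ i := by
    conv_lhs => rw [hA.spectral_theorem, Unitary.conjStarAlgAut_apply, ← Matrix.mul_assoc,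
      trace_mul_comm, star_eq_conjTranspose, ← Matrix.mul_assoc, ← Matrix.mul_assoc]
    simp [Matrix.trace, Matrix.mul_diagonal, μ, U]
  have hμ : ∑ i, μ i = 0 := by
    have h := hA.trace_eq_sum_eigenvalues
    rw [hA0, ← RCLike.ofReal_sum] at h
    exact RCLike.ofReal_eq_zero.1 h.symm
  have hterm : ∀ i, ((Uᴴ * D * U) i i).re * μ i ≤ (|μ i| + μ i) / 2 := by
    intro i
    obtain ⟨h0, h1⟩ := hE.re_diag_mem_Icc hE' i
    cases abs_cases (μ i) <;> nlinarith
  calc (D * A).trace.re = ∑ i, ((Uᴴ * D * U) i i).re * μ i := by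
        simp [htrace, Complex.re_sum, Complex.mul_re]
    _ ≤ ∑ i, (|μ i| + μ i) / 2 := Finset.sum_le_sum fun i _ => hterm i
    _ = traceNorm A / 2 := by
        rw [← Finset.sum_div, Finset.sum_add_distrib, hμ, add_zero, traceNorm, dif_pos hA]

end Helstrom

lemma outer_eq_vecMulVec {m : Type*} (u : m → ℂ) : outer u = vecMulVec u (star u) := rfl

lemma trace_outer {m : Type*} [Fintype m] (u : m → ℂ) :
    (outer u).trace = ((∑ i, ‖u i‖ ^ 2 : ℝ) : ℂ) := by
  simp [Matrix.trace, outer, Complex.mul_conj, Complex.normSq_eq_norm_sq]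

section Qubit

variable {m : Type*}

lemma Pc_eq_outer (b : Fin 2) : Pc b = outer (Pi.single b 1) := by
  ext i j
  fin_cases b <;> fin_cases i <;> fin_cases j <;> simp [Pc, outer]

lemma Ph_eq_smul_outer (z : Fin 2) :
    Ph z = ((2⁻¹ : ℝ) : ℂ) • outer (fun i : Fin 2 => (-1 : ℂ) ^ ((i : ℕ) * (z : ℕ))) := by
  ext i j
  fin_cases z <;> fin_cases i <;> fin_cases j <;> simp [Ph, outer]

lemma Pc_add : Pc 0 + Pc 1 = 1 := by
  ext i j
  fin_cases i <;> fin_cases j <;> simp [Pc]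

lemma Ph_add : Ph 0 + Ph 1 = 1 := by
  ext i j
  fin_cases i <;> fin_cases j <;> norm_num [Ph]

lemma posSemidef_Pc (b : Fin 2) : (Pc b).PosSemidef := by
  rw [Pc_eq_outer, outer_eq_vecMulVec]
  exact posSemidef_vecMulVec_self_star _

lemma posSemidef_Ph (z : Fin 2) : (Ph z).PosSemidef := by
  rw [Ph_eq_smul_outer, outer_eq_vecMulVec]
  exact (posSemidef_vecMulVec_self_star _).smul (Complex.zero_le_real.2 (by norm_num))

noncomputable def guessOp (R : Fin 2 → Matrix (Fin 2) (Fin 2) ℂ) (O : Fin 2 → Matrix m m ℂ) :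
    Matrix (Fin 2 × m) (Fin 2 × m) ℂ :=
  ∑ b, R b ⊗ₖ O b

lemma guessOp_one [DecidableEq m] {R : Fin 2 → Matrix (Fin 2) (Fin 2) ℂ} (hR : R 0 + R 1 = 1) :
    guessOp R (fun _ => (1 : Matrix m m ℂ)) = 1 := by
  rw [guessOp, Fin.sum_univ_two, ← add_kronecker, hR, one_kronecker_one]

lemma guessOp_add_guessOp_add_one [DecidableEq m] {R : Fin 2 → Matrix (Fin 2) (Fin 2) ℂ}
    (hR : R 0 + R 1 = 1) {O : Fin 2 → Matrix m m ℂ} (hO : O 0 + O 1 = 1) :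
    guessOp R O + guessOp R (fun b => O (b + 1)) = 1 := by
  have hflip : ∀ b, O b + O (b + 1) = 1 := by
    intro b
    fin_cases b
    · exact hO
    · simpa [add_comm] using hO
  rw [guessOp, guessOp, ← Finset.sum_add_distrib]
  simp_rw [← kronecker_add, hflip]
  exact guessOp_one hR

variable [Fintype m]

lemma expVal_outer_kronecker {ι : Type*} [Fintype ι] (u : ι → ℂ) (O : Matrix m m ℂ)
    (ψ : ι × m → ℂ) :
    expVal (outer u ⊗ₖ O) ψ = expVal O (∑ i, star (u i) • Function.curry ψ i) := by
  simp only [expVal, dotProduct, mulVec, kroneckerMap_apply, outer, Fintype.sum_prod_type,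
    Finset.sum_apply, Pi.smul_apply, Pi.star_apply, star_sum, smul_eq_mul, Finset.mul_sum,
    Finset.sum_mul, Function.curry_apply, RCLike.star_def, star_mul', Complex.conj_conj]
  congr 1
  rw [Finset.sum_comm]
  refine Finset.sum_congr rfl fun j _ => ?_
  conv_lhs => rw [Finset.sum_comm]
  conv_rhs => rw [Finset.sum_comm]
  refine Finset.sum_congr rfl fun k _ => ?_
  rw [Finset.sum_comm]
  refine Finset.sum_congr rfl fun l _ => Finset.sum_congr rfl fun i _ => ?_
  ring

lemma expVal_Pc_kronecker (b : Fin 2) (O : Matrix m m ℂ) (ψ : Fin 2 × m → ℂ) :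
    expVal (Pc b ⊗ₖ O) ψ = expVal O (Function.curry ψ b) := by
  rw [Pc_eq_outer, expVal_outer_kronecker]
  fin_cases b <;> simp

lemma expVal_Ph_kronecker (z : Fin 2) (O : Matrix m m ℂ) (ψ : Fin 2 × m → ℂ) :
    expVal (Ph z ⊗ₖ O) ψ =
      expVal O (Function.curry ψ 0 + (-1 : ℂ) ^ (z : ℕ) • Function.curry ψ 1) / 2 := by
  rw [Ph_eq_smul_outer, smul_kronecker, expVal, smul_mulVec, dotProduct_smul, smul_eq_mul,
    Complex.re_ofReal_mul, ← expVal, expVal_outer_kronecker]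
  fin_cases z <;> simp [inv_mul_eq_div]

lemma guessProb_eq_expVal {dM dM' : ℕ} (R : Fin 2 → Matrix (Fin 2) (Fin 2) ℂ)
    (O : Fin 2 → Matrix (Fin dM × Fin dM') (Fin dM × Fin dM') ℂ)
    (ψ : Fin 2 × Fin dM × Fin dM' → ℂ) :
    guessProb R O ψ = expVal (guessOp R O) ψ := by
  rw [← re_trace_mul_outer, guessOp, Finset.sum_mul, Matrix.trace_sum, guessProb]

lemma expVal_guessOp_Pc (O : Fin 2 → Matrix m m ℂ) (ψ : Fin 2 × m → ℂ) :
    expVal (guessOp Pc O) ψ = ∑ b, expVal (O b) (Function.curry ψ b) := by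
  simp only [guessOp, expVal_sum, expVal_Pc_kronecker]

lemma expVal_guessOp_Ph (O : Fin 2 → Matrix m m ℂ) (ψ : Fin 2 × m → ℂ) :
    expVal (guessOp Ph O) ψ = (∑ z : Fin 2,
      expVal (O z) (Function.curry ψ 0 + (-1 : ℂ) ^ (z : ℕ) • Function.curry ψ 1)) / 2 := by
  simp only [guessOp, expVal_sum, expVal_Ph_kronecker, Finset.sum_div]

lemma trace_guessOp_Pc_mul_cqMeasure (P : Fin 2 → Matrix (Fin 2) (Fin 2) ℂ)
    (O : Fin 2 → Matrix m m ℂ) (ρ : Matrix (Fin 2 × m) (Fin 2 × m) ℂ) :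
    (guessOp Pc O * cqMeasure P ρ).trace = (guessOp P O * ρ).trace := by
  simp [guessOp, Matrix.trace, Matrix.mul_apply, cqMeasure, Fintype.sum_prod_type, Pc,
    Finset.sum_add_distrib]
  simp only [← Finset.sum_add_distrib]
  refine Finset.sum_congr rfl fun i _ => Finset.sum_congr rfl fun j _ => ?_
  ring

lemma isHermitian_cqMeasure {P : Fin 2 → Matrix (Fin 2) (Fin 2) ℂ}
    (hP : ∀ z, (P z).IsHermitian) {ρ : Matrix (Fin 2 × m) (Fin 2 × m) ℂ} (hρ : ρ.IsHermitian) :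
    (cqMeasure P ρ).IsHermitian := by
  ext ⟨z, i⟩ ⟨z', j⟩
  simp only [conjTranspose_apply, cqMeasure]
  rcases eq_or_ne z' z with rfl | h
  · simp only [if_true, star_sum, star_mul']
    rw [Finset.sum_comm]
    refine Finset.sum_congr rfl fun r _ => Finset.sum_congr rfl fun t _ => ?_
    rw [← conjTranspose_apply (P z'), (hP z').eq, ← conjTranspose_apply ρ, hρ.eq]
  · simp [h, Ne.symm h]

lemma posSemidef_guessOp {R : Fin 2 → Matrix (Fin 2) (Fin 2) ℂ}
    {O : Fin 2 → Matrix m m ℂ} (hR : ∀ b, (R b).PosSemidef) (hO : ∀ b, (O b).PosSemidef) :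
    (guessOp R O).PosSemidef :=
  posSemidef_sum _ fun b _ => (hR b).kronecker (hO b)

variable [DecidableEq m]

lemma trace_cqMeasure {P : Fin 2 → Matrix (Fin 2) (Fin 2) ℂ} (hP : P 0 + P 1 = 1)
    (ρ : Matrix (Fin 2 × m) (Fin 2 × m) ℂ) : (cqMeasure P ρ).trace = ρ.trace := by
  simpa only [guessOp_one Pc_add, guessOp_one hP, Matrix.one_mul] using
    trace_guessOp_Pc_mul_cqMeasure P (fun _ => 1) ρ

lemma posSemidef_one_sub_guessOp {R : Fin 2 → Matrix (Fin 2) (Fin 2) ℂ}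
    (hR : ∀ b, (R b).PosSemidef) (hR1 : R 0 + R 1 = 1) {O : Fin 2 → Matrix m m ℂ}
    (hO : ∀ b, (O b).PosSemidef) (hO1 : O 0 + O 1 = 1) :
    (1 - guessOp R O).PosSemidef := by
  rw [← guessOp_add_guessOp_add_one hR1 hO1, add_sub_cancel_left]
  exact posSemidef_guessOp hR fun b => hO (b + 1)

lemma expVal_guessOp_le {R : Fin 2 → Matrix (Fin 2) (Fin 2) ℂ}
    (hR : ∀ b, (R b).PosSemidef) (hR1 : R 0 + R 1 = 1) {O : Fin 2 → Matrix m m ℂ}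
    (hO : ∀ b, (O b).PosSemidef) (hO1 : O 0 + O 1 = 1) (ψ : Fin 2 × m → ℂ) :
    expVal (guessOp R O) ψ ≤ ∑ p, ‖ψ p‖ ^ 2 := by
  have h := (posSemidef_one_sub_guessOp hR hR1 hO hO1).expVal_nonneg ψ
  rw [expVal_sub, expVal_one] at h
  linarith

end Qubit

section Uncertainty

variable {m : Type*} [Fintype m]

lemma Matrix.PosSemidef.expVal_add_smul_le {K : Matrix m m ℂ} (hK : K.PosSemidef)
    (x y : m → ℂ) {s : ℂ} (hs : ‖s‖ = 1) {c : ℝ} (hc : 0 < c) :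
    expVal K (x + s • y) ≤ (1 + c⁻¹) * expVal K x + (1 + c) * expVal K y := by
  simpa [expVal_smul, hs] using hK.expVal_add_le x (s • y) hc

/-- An uncertainty relation for the two marginals of a joint measurement `K`. -/
theorem expVal_guessOp_Ph_Pc_le [DecidableEq m] {K : Fin 2 → Fin 2 → Matrix m m ℂ}
    (hK : ∀ b z, (K b z).PosSemidef) (hK1 : ∑ b, ∑ z, K b z = 1) (ψ : Fin 2 × m → ℂ) :
    4 * expVal (guessOp Ph fun z => ∑ b, K b z) ψ +
      3 * expVal (guessOp Pc fun b => ∑ z, K b z) ψ ≤ 6 * ∑ p, ‖ψ p‖ ^ 2 := by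
  rw [expVal_guessOp_Ph, expVal_guessOp_Pc]
  simp only [expVal_sum]
  set x := Function.curry ψ 0
  set y := Function.curry ψ 1
  have hsign : ∀ z : Fin 2, ‖(-1 : ℂ) ^ (z : ℕ)‖ = 1 := fun z => by simp
  -- `c = 2` resp. `c = 1/2`: the weight 3 falls on the failure terms of the computational guess
  have h0 : ∀ z : Fin 2, expVal (K 0 z) (x + (-1 : ℂ) ^ (z : ℕ) • y) ≤
      3 / 2 * expVal (K 0 z) x + 3 * expVal (K 0 z) y := fun z => by
    have := (hK 0 z).expVal_add_smul_le x y (hsign z) two_pos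
    norm_num at this ⊢
    linarith
  have h1 : ∀ z : Fin 2, expVal (K 1 z) (x + (-1 : ℂ) ^ (z : ℕ) • y) ≤
      3 * expVal (K 1 z) x + 3 / 2 * expVal (K 1 z) y := fun z => by
    have := (hK 1 z).expVal_add_smul_le x y (hsign z) (by norm_num : (0 : ℝ) < 2⁻¹)
    norm_num at this ⊢
    linarith
  have hnorm : ∀ v : m → ℂ, ∑ b, ∑ z, expVal (K b z) v = ∑ j, ‖v j‖ ^ 2 := fun v => by
    simp only [← expVal_sum, hK1, expVal_one]
  have hψ : ∑ p, ‖ψ p‖ ^ 2 = ∑ j, ‖x j‖ ^ 2 + ∑ j, ‖y j‖ ^ 2 := by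
    rw [Fintype.sum_prod_type, Fin.sum_univ_two]
    rfl
  have hx := hnorm x
  have hy := hnorm y
  rw [hψ]
  simp only [Fin.sum_univ_two] at hx hy ⊢
  linarith [h0 0, h0 1, h1 0, h1 1]

end Uncertainty

theorem guessProb_Ph_Pc_le {dM dM' : ℕ} {Λ : Fin 2 → Matrix (Fin dM) (Fin dM) ℂ}
    (hΛ : ∀ b, (Λ b).PosSemidef) (hΛ1 : Λ 0 + Λ 1 = 1) {Λ' : Fin 2 → Matrix (Fin dM') (Fin dM') ℂ}
    (hΛ' : ∀ z, (Λ' z).PosSemidef) (hΛ'1 : Λ' 0 + Λ' 1 = 1) (ψ : Fin 2 × Fin dM × Fin dM' → ℂ) :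
    4 * guessProb Ph (fun z => (1 : Matrix (Fin dM) (Fin dM) ℂ) ⊗ₖ Λ' z) ψ +
      3 * guessProb Pc (fun b => Λ b ⊗ₖ (1 : Matrix (Fin dM') (Fin dM') ℂ)) ψ ≤
      6 * ∑ p, ‖ψ p‖ ^ 2 := by
  have h := expVal_guessOp_Ph_Pc_le (K := fun b z => Λ b ⊗ₖ Λ' z)
    (fun b z => (hΛ b).kronecker (hΛ' z))
    (by simp only [Fin.sum_univ_two, ← add_kronecker, ← kronecker_add, hΛ1, hΛ'1,
      one_kronecker_one]) ψ
  simp only [Fin.sum_univ_two, ← add_kronecker, ← kronecker_add, hΛ1, hΛ'1] at h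
  simpa only [guessProb_eq_expVal] using h


section Distinguishing

variable {m : Type*} [Fintype m] [DecidableEq m]

theorem expVal_guessOp_sub_le_half_traceNorm {P : Fin 2 → Matrix (Fin 2) (Fin 2) ℂ}
    (hP : ∀ z, (P z).IsHermitian) (hP1 : P 0 + P 1 = 1) {O : Fin 2 → Matrix m m ℂ}
    (hO : ∀ b, (O b).PosSemidef) (hO1 : O 0 + O 1 = 1) {ψ₀ ψ₁ : Fin 2 × m → ℂ}
    (hψ : ∑ p, ‖ψ₀ p‖ ^ 2 = ∑ p, ‖ψ₁ p‖ ^ 2) :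
    expVal (guessOp P O) ψ₁ - expVal (guessOp P O) ψ₀ ≤
      traceNorm (cqMeasure P (outer ψ₀) - cqMeasure P (outer ψ₁)) / 2 := by
  set D := guessOp Pc O
  have hD : (1 - D).PosSemidef := posSemidef_one_sub_guessOp posSemidef_Pc Pc_add hO hO1
  have hD' : (1 - (1 - D)).PosSemidef := by
    rw [sub_sub_cancel]
    exact posSemidef_guessOp posSemidef_Pc hO
  have hherm : ∀ ψ : Fin 2 × m → ℂ, (cqMeasure P (outer ψ)).IsHermitian := fun ψ =>
    isHermitian_cqMeasure hP (posSemidef_vecMulVec_self_star ψ).isHermitian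
  have htr : (cqMeasure P (outer ψ₀) - cqMeasure P (outer ψ₁)).trace = 0 := by
    rw [trace_sub, trace_cqMeasure hP1, trace_cqMeasure hP1, trace_outer, trace_outer, hψ,
      sub_self]
  have hexp : ∀ ψ, (D * cqMeasure P (outer ψ)).trace.re = expVal (guessOp P O) ψ := fun ψ => by
    rw [trace_guessOp_Pc_mul_cqMeasure, re_trace_mul_outer]
  have h := re_trace_mul_le_half_traceNorm hD hD' ((hherm ψ₀).sub (hherm ψ₁)) htr
  rw [Matrix.sub_mul, Matrix.one_mul, trace_sub, htr, Matrix.mul_sub, trace_sub, zero_sub,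
    Complex.neg_re, Complex.sub_re, hexp, hexp] at h
  linarith

end Distinguishing

section Numeric
open Real

lemma binEnt_eq_binEntropy_div_log_two (x : ℝ) : binEnt x = binEntropy x / log 2 := by
  rw [binEnt, binEntropy, logb, logb, log_inv, log_inv]
  ring

lemma binEnt_nonneg {x : ℝ} (h0 : 0 ≤ x) (h1 : x ≤ 1) : 0 ≤ binEnt x := by
  rw [binEnt_eq_binEntropy_div_log_two]
  exact div_nonneg (binEntropy_nonneg h0 h1) (log_nonneg one_le_two)

lemma log_two_div_two_le_binEntropy_inv_eight : log 2 / 2 ≤ binEntropy 8⁻¹ := by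
  have h7 : 7 * log 7 ≤ 20 * log 2 := by
    have h := log_le_log (by norm_num) (show (7 : ℝ) ^ 7 ≤ 2 ^ 20 by norm_num)
    rwa [log_pow, log_pow, Nat.cast_ofNat, Nat.cast_ofNat] at h
  have h8 : log 8 = 3 * log 2 := by
    rw [show (8 : ℝ) = 2 ^ 3 by norm_num, log_pow]
    norm_num
  rw [binEntropy, inv_inv, show (1 - 8⁻¹ : ℝ)⁻¹ = 8 / 7 by norm_num,
    log_div (by norm_num) (by norm_num), h8]
  linarith

lemma four_mul_le_binEnt {x : ℝ} (h0 : 0 ≤ x) (h1 : x ≤ 8⁻¹) : 4 * x ≤ binEnt x := by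
  have hconc := strictConcave_binEntropy.concaveOn.2
    (⟨by norm_num, by norm_num⟩ : (8⁻¹ : ℝ) ∈ Set.Icc 0 1)
    (⟨le_rfl, zero_le_one⟩ : (0 : ℝ) ∈ Set.Icc 0 1)
    (by positivity : 0 ≤ 8 * x) (by linarith : 0 ≤ 1 - 8 * x) (by ring)
  simp only [smul_eq_mul, binEntropy_zero, mul_zero, add_zero] at hconc
  rw [show 8 * x * 8⁻¹ = x by ring] at hconc
  rw [binEnt_eq_binEntropy_div_log_two, le_div_iff₀ (log_pos one_lt_two)]
  nlinarith [log_two_div_two_le_binEntropy_inv_eight]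

end Numeric

/-- for `ψ⁰ ∈ S₀^ε`, `ψ¹ ∈ S₁^ε` with `ε < 0.11`, the trace distance `Δ` of
the Hadamard-measured states satisfies `1 - 2h(ε) ≤ 4Δ + (1+Δ)h(Δ/(1+Δ))`; in particular `Δ > 0`
and `ψ⁰ ≠ ψ¹`. -/
theorem hadamard_traceDist_lower (dM dM' : ℕ) (ε : ℝ) (hε : ε < 0.11)
    (ψ0 ψ1 : Fin 2 × Fin dM × Fin dM' → ℂ)
    (h0 : ψ0 ∈ predSet Pc ε) (h1 : ψ1 ∈ predSet Ph ε) (Δ : ℝ)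
    (hΔ : Δ = (1 / 2) * traceNorm (cqMeasure Ph (outer ψ0) - cqMeasure Ph (outer ψ1))) :
    1 - 2 * binEnt ε ≤ 4 * Δ + (1 + Δ) * binEnt (Δ / (1 + Δ)) ∧ 0 < Δ ∧ ψ0 ≠ ψ1 := by
  obtain ⟨hN0, ⟨Λ, hΛ, hΛ1, hcomp⟩, -⟩ := h0
  obtain ⟨hN1, -, ⟨Λ', hΛ', hΛ'1, hhad⟩⟩ := h1
  norm_num at hε
  have hcomp_le : guessProb Pc (fun b => Λ b ⊗ₖ (1 : Matrix (Fin dM') (Fin dM') ℂ)) ψ0 ≤ 1 := by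
    rw [guessProb_eq_expVal, ← hN0]
    exact expVal_guessOp_le posSemidef_Pc Pc_add (fun b => (hΛ b).kronecker .one)
      (by rw [← add_kronecker, hΛ1, one_kronecker_one]) ψ0
  have huncert := guessProb_Ph_Pc_le hΛ hΛ1 hΛ' hΛ'1 ψ0
  rw [hN0] at huncert
  have hdist : guessProb Ph (fun z => (1 : Matrix (Fin dM) (Fin dM) ℂ) ⊗ₖ Λ' z) ψ1 -
      guessProb Ph (fun z => (1 : Matrix (Fin dM) (Fin dM) ℂ) ⊗ₖ Λ' z) ψ0 ≤ Δ := by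
    rw [guessProb_eq_expVal, guessProb_eq_expVal, hΔ, one_div_mul_eq_div]
    exact expVal_guessOp_sub_le_half_traceNorm (fun z => (posSemidef_Ph z).isHermitian) Ph_add
      (fun z => PosSemidef.one.kronecker (hΛ' z))
      (by rw [← kronecker_add, hΛ'1, one_kronecker_one]) (hN0.trans hN1.symm)
  have hΔpos : 0 < Δ := by linarith
  refine ⟨?_, hΔpos, ?_⟩
  · have hbinε : 4 * ε ≤ binEnt ε := four_mul_le_binEnt (by linarith) (by linarith)
    have hbinΔ : 0 ≤ (1 + Δ) * binEnt (Δ / (1 + Δ)) :=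
      mul_nonneg (by linarith) (binEnt_nonneg (by positivity)
        ((div_le_one (by linarith)).2 (by linarith)))
    linarith
  · rintro rfl
    linarith
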